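/- arXiv:math/0408394 — 4 statements merged into one kernel-verified Lean document; each statement's English description precedes it below -/
import Mathlib

section
/- Let R be a noetherian local ring with maximal ideal m and residue field k, and let M be a finitely generated module over a noetherian local R-algebra A with mA contained in the maximal ideal of A. If M is a flat R-module and h ∈ A acts injectively on M ⊗_R k, then h acts injectively on M ⊗_R T for every R-algebra T, and M/hM is R-flat. -/
set_option synthInstance.maxHeartbeats 1000000
set_option maxHeartbeats 1000000

universe u v w t

section AuxLemmas

universe uR uM uV uW uU

variable {R : Type uR} [CommRing R]

open TensorProduct

private theorem aux_subsingleton {M : Type uM} {V : Type uV} [AddCommGroup M] [Module R M]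
    [AddCommGroup V] [Module R V] [Subsingleton V] (z : M ⊗[R] V) : z = 0 := by
  induction z using TensorProduct.induction_on with
  | zero => rfl
  | tmul m v => rw [Subsingleton.elim v (0 : V), TensorProduct.tmul_zero]
  | add a b ha hb => rw [ha, hb, add_zero]

private theorem aux_lid {P : Type uV} {P' : Type uW} [AddCommGroup P] [Module R P]
    [AddCommGroup P'] [Module R P'] (f : P →ₗ[R] P') (u : R ⊗[R] P) :
    f (TensorProduct.lid R P u) = TensorProduct.lid R P' (f.lTensor R u) := by
  induction u using TensorProduct.induction_on with
  | zero => simp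
  | tmul r x => simp
  | add a b ha hb => simp only [map_add, ha, hb]

/-- If `0 → V → W → U → 0` stays exact on the left after tensoring with `M`, and a commuting
endomorphism of `M` is injective after tensoring with `V` and with `U`, then it is injective
after tensoring with `W`. -/
private theorem aux_chase {M : Type uM} [AddCommGroup M] [Module R M]
    {V : Type uV} {W : Type uW} {U : Type uU}
    [AddCommGroup V] [Module R V] [AddCommGroup W] [Module R W] [AddCommGroup U] [Module R U]
    (φ : M →ₗ[R] M) (ι : V →ₗ[R] W) (p : W →ₗ[R] U)
    (hexact : Function.Exact ι p) (hsurj : Function.Surjective p)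
    (hι : Function.Injective (ι.lTensor M))
    (hV : Function.Injective (φ.rTensor V)) (hU : Function.Injective (φ.rTensor U)) :
    Function.Injective (φ.rTensor W) := by
  apply (injective_iff_map_eq_zero _).mpr
  intro x hx
  have h1 : (φ.rTensor U) ((p.lTensor M) x) = 0 := by
    rw [← LinearMap.comp_apply, LinearMap.rTensor_comp_lTensor, ← LinearMap.lTensor_comp_rTensor,
      LinearMap.comp_apply, hx, map_zero]
  have h2 : (p.lTensor M) x = 0 := (injective_iff_map_eq_zero _).mp hU _ h1
  obtain ⟨v, rfl⟩ := (lTensor_exact M hexact hsurj x).mp h2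
  have h3 : (ι.lTensor M) ((φ.rTensor V) v) = 0 := by
    rw [← LinearMap.comp_apply, LinearMap.lTensor_comp_rTensor, ← LinearMap.rTensor_comp_lTensor,
      LinearMap.comp_apply, hx]
  have h4 : (φ.rTensor V) v = 0 := (injective_iff_map_eq_zero _).mp hι _ h3
  have h5 : v = 0 := (injective_iff_map_eq_zero _).mp hV _ h4
  rw [h5, map_zero]

/-- If a commuting endomorphism of `M` is injective after tensoring with the residue field `k`,
then it is injective after tensoring with any `k`-vector space. -/
private theorem aux_field [IsLocalRing R] {M : Type uM} [AddCommGroup M] [Module R M]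
    (φ : M →ₗ[R] M)
    (hinj : Function.Injective (φ.rTensor (IsLocalRing.ResidueField R)))
    (V : Type uV) [AddCommGroup V] [Module R V]
    [Module (IsLocalRing.ResidueField R) V]
    [IsScalarTower R (IsLocalRing.ResidueField R) V] :
    Function.Injective (φ.rTensor V) := by
  set k := IsLocalRing.ResidueField R with hk
  rw [← LinearMap.lTensor_inj_iff_rTensor_inj]
  let ψ : k ⊗[R] M →ₗ[k] k ⊗[R] M := φ.baseChange k
  have hψ : Function.Injective ψ := by
    show Function.Injective ⇑(φ.baseChange k)
    rw [LinearMap.baseChange_eq_ltensor]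
    exact (LinearMap.lTensor_inj_iff_rTensor_inj k φ).mpr hinj
  have hinner : Function.Injective (LinearMap.lTensor V ψ) :=
    Module.Flat.lTensor_preserves_injective_linearMap (M := V) ψ hψ
  let e := TensorProduct.AlgebraTensorModule.cancelBaseChange R k k V M
  have key : ∀ z : V ⊗[k] (k ⊗[R] M), (φ.lTensor V) (e z) = e ((LinearMap.lTensor V ψ) z) := by
    intro z
    induction z using TensorProduct.induction_on with
    | zero => simp
    | tmul v w =>
      induction w using TensorProduct.induction_on with
      | zero => simp
      | tmul c m =>
        simp [e, ψ, TensorProduct.AlgebraTensorModule.cancelBaseChange_tmul,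
          LinearMap.baseChange_tmul]
      | add w₁ w₂ hw₁ hw₂ => simp only [TensorProduct.tmul_add, map_add, hw₁, hw₂]
    | add a b ha hb => simp only [map_add, ha, hb]
  intro a b hab
  obtain ⟨za, rfl⟩ := e.surjective a
  obtain ⟨zb, rfl⟩ := e.surjective b
  rw [key, key] at hab
  exact congrArg e (hinner (e.injective hab))

end AuxLemmas

open TensorProduct

/-- Let `R` be a noetherian local ring with residue field `k`, `A` a noetherian local
`R`-algebra with `mA` contained in the maximal ideal of `A` (i.e. `R → A` local), and `M`
a finitely generated `A`-module which is flat over `R`.  If `h ∈ A` acts injectively on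
`M ⊗_R k`, then `h` acts injectively on `M ⊗_R T` for every `R`-algebra `T`, and `M/hM`
is `R`-flat. -/
theorem flat_quot_of_regular_on_closed_fiber
    (R : Type u) [CommRing R] [IsNoetherianRing R] [IsLocalRing R]
    (A : Type v) [CommRing A] [IsNoetherianRing A] [IsLocalRing A]
    [Algebra R A] [IsLocalHom (algebraMap R A)]
    (M : Type w) [AddCommGroup M] [Module R M] [Module A M] [IsScalarTower R A M]
    [Module.Finite A M] [Module.Flat R M]
    (h : A)
    (hinj : Function.Injective
      (LinearMap.rTensor (IsLocalRing.ResidueField R)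
        ((LinearMap.lsmul A M h).restrictScalars R))) :
    (∀ (T : Type t) [CommRing T] [Algebra R T],
        Function.Injective
          (LinearMap.rTensor T ((LinearMap.lsmul A M h).restrictScalars R))) ∧
    Module.Flat R (M ⧸ LinearMap.range ((LinearMap.lsmul A M h).restrictScalars R)) := by
  classical
  set φ : M →ₗ[R] M := (LinearMap.lsmul A M h).restrictScalars R with hφdef
  have hφ_apply : ∀ x : M, φ x = h • x := fun _ => rfl
  set m := IsLocalRing.maximalIdeal R with hm
  -- Step A : `h` acts injectively on `M ⊗ R/(I ⊔ m^n)` for every ideal `I` and every `n`.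
  have hA : ∀ (n : ℕ) (I : Ideal R),
      Function.Injective (φ.rTensor (R ⧸ (I ⊔ m ^ n))) := by
    intro n
    induction n with
    | zero =>
      intro I
      haveI : Subsingleton (R ⧸ (I ⊔ m ^ 0)) :=
        Ideal.Quotient.subsingleton_iff.mpr (by rw [pow_zero, Ideal.one_eq_top, sup_top_eq])
      intro a b _
      rw [aux_subsingleton a, aux_subsingleton b]
    | succ n IH =>
      intro I
      have hle : (I ⊔ m ^ (n + 1)) ≤ (I ⊔ m ^ n) :=
        sup_le_sup_left (Ideal.pow_le_pow_right (Nat.le_succ n)) I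
      have hle' : (I ⊔ m ^ (n + 1) : Ideal R) ≤
          Submodule.comap (LinearMap.id : R →ₗ[R] R) (I ⊔ m ^ n) := by
        rwa [Submodule.comap_id]
      let p : (R ⧸ (I ⊔ m ^ (n + 1))) →ₗ[R] R ⧸ (I ⊔ m ^ n) :=
        Submodule.mapQ _ _ LinearMap.id hle'
      have hpsurj : Function.Surjective p := by
        intro y
        obtain ⟨x, rfl⟩ := Submodule.Quotient.mk_surjective _ y
        refine ⟨Submodule.Quotient.mk x, ?_⟩
        show Submodule.mapQ _ _ LinearMap.id hle' (Submodule.Quotient.mk x)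
          = Submodule.Quotient.mk x
        rw [Submodule.mapQ_apply]
        rfl
      -- the kernel of `p` is killed by `m`
      have htor : Module.IsTorsionBySet R (LinearMap.ker p) (m : Set R) := by
        rintro ⟨xq, hxq⟩ ⟨a, ha⟩
        obtain ⟨r, rfl⟩ := Submodule.Quotient.mk_surjective _ xq
        have hrJ : r ∈ (I ⊔ m ^ n : Ideal R) := by
          have : p (Submodule.Quotient.mk r) = 0 := hxq
          rw [Submodule.mapQ_apply] at this
          simpa using (Submodule.Quotient.mk_eq_zero _).mp this
        apply Subtype.ext
        show a • (Submodule.Quotient.mk r : R ⧸ (I ⊔ m ^ (n + 1) : Ideal R)) = 0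
        rw [← Submodule.Quotient.mk_smul, Submodule.Quotient.mk_eq_zero]
        obtain ⟨ri, hri, rm, hrm, hr⟩ := Submodule.mem_sup.mp hrJ
        have : a • r = a * ri + a * rm := by rw [← hr, smul_eq_mul, mul_add]
        rw [this]
        apply Submodule.add_mem
        · exact Submodule.mem_sup_left (Ideal.mul_mem_left _ _ hri)
        · refine Submodule.mem_sup_right ?_
          have : a * rm ∈ m * m ^ n := Ideal.mul_mem_mul ha hrm
          rwa [← pow_succ'] at this
      letI : Module (IsLocalRing.ResidueField R) (LinearMap.ker p) := htor.module
      letI : IsScalarTower R (IsLocalRing.ResidueField R) (LinearMap.ker p) :=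
        htor.isScalarTower
      exact aux_chase φ (LinearMap.ker p).subtype p (LinearMap.exact_subtype_ker_map p) hpsurj
        (Module.Flat.lTensor_preserves_injective_linearMap _ (Submodule.injective_subtype _))
        (aux_field φ hinj (LinearMap.ker p)) (IH I)
  -- injectivity on `M ⊗ R/J` yields injectivity modulo `J • M`.
  have hmem : ∀ J : Ideal R, Function.Injective (φ.rTensor (R ⧸ J)) →
      ∀ x : M, h • x ∈ (J • ⊤ : Submodule R M) → x ∈ (J • ⊤ : Submodule R M) := by
    intro J hJ x hx
    have hle2 : (J • ⊤ : Submodule R M) ≤ Submodule.comap φ (J • ⊤) := by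
      refine Submodule.smul_le.mpr fun c hc y _ => ?_
      rw [Submodule.mem_comap, map_smul]
      exact Submodule.smul_mem_smul hc trivial
    let q := Submodule.mapQ (J • ⊤ : Submodule R M) (J • ⊤) φ hle2
    let e := TensorProduct.tensorQuotEquivQuotSMul M J
    have hcomm : ∀ y : M ⊗[R] (R ⧸ J), e ((φ.rTensor (R ⧸ J)) y) = q (e y) := by
      intro y
      induction y using TensorProduct.induction_on with
      | zero => simp
      | tmul x0 c =>
        obtain ⟨r, rfl⟩ := Ideal.Quotient.mk_surjective c
        simp [e, q, LinearMap.rTensor_tmul, TensorProduct.tensorQuotEquivQuotSMul_tmul_mk,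
          Submodule.mapQ_apply, map_smul]
      | add a b ha hb => rw [map_add, map_add, map_add, map_add, ha, hb]
    have h0 : e ((φ.rTensor (R ⧸ J)) (e.symm (Submodule.Quotient.mk x))) = 0 := by
      rw [hcomm, LinearEquiv.apply_symm_apply]
      show Submodule.mapQ _ _ φ hle2 (Submodule.Quotient.mk x) = 0
      rw [Submodule.mapQ_apply, Submodule.Quotient.mk_eq_zero]
      rw [hφ_apply]
      exact hx
    have h1 : (φ.rTensor (R ⧸ J)) (e.symm (Submodule.Quotient.mk x)) = 0 :=
      e.map_eq_zero_iff.mp h0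
    have h2 : e.symm (Submodule.Quotient.mk x) = 0 :=
      (injective_iff_map_eq_zero _).mp hJ _ h1
    have h3 : (Submodule.Quotient.mk x : M ⧸ (J • ⊤ : Submodule R M)) = 0 :=
      e.symm.map_eq_zero_iff.mp h2
    exact (Submodule.Quotient.mk_eq_zero _).mp h3
  -- Step B : `h` acts injectively modulo `I • M` for every ideal `I` (Krull intersection).
  have hmapm : (IsLocalRing.maximalIdeal R).map (algebraMap R A) ≤ IsLocalRing.maximalIdeal A := by
    rw [Ideal.map_le_iff_le_comap]
    intro c hc
    rw [Ideal.mem_comap, IsLocalRing.mem_maximalIdeal, mem_nonunits_iff]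
    intro hu
    exact (IsLocalRing.mem_maximalIdeal c).mp hc (IsLocalHom.map_nonunit c hu)
  have hB : ∀ (I : Ideal R) (x : M), h • x ∈ (I • ⊤ : Submodule R M) →
      x ∈ (I • ⊤ : Submodule R M) := by
    intro I x hx
    have hxn : ∀ n : ℕ, x ∈ (I • ⊤ : Submodule R M) ⊔ (m ^ n • ⊤) := by
      intro n
      have h1 : h • x ∈ ((I ⊔ m ^ n) • ⊤ : Submodule R M) := by
        rw [Submodule.sup_smul]
        exact Submodule.mem_sup_left hx
      have h2 := hmem _ (hA n I) x h1
      rwa [Submodule.sup_smul] at h2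
    -- An `A`-submodule with the same carrier as `I • ⊤`.
    let NA : Submodule A M :=
      { carrier := (I • ⊤ : Submodule R M)
        add_mem' := fun ha hb => Submodule.add_mem _ ha hb
        zero_mem' := Submodule.zero_mem _
        smul_mem' := fun a y hy => Submodule.smul_induction_on hy
          (fun c hc z _ => by
            have hcz : a • c • z = c • a • z := by
              rw [← algebraMap_smul A c z, ← mul_smul, mul_comm, mul_smul, algebraMap_smul]
            rw [hcz]
            exact Submodule.smul_mem_smul hc trivial)
          (fun u' v' hu hv => by rw [smul_add]; exact Submodule.add_mem _ hu hv) }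
    have hNA : ∀ y : M, y ∈ NA ↔ y ∈ (I • ⊤ : Submodule R M) := fun _ => Iff.rfl
    -- move to a common universe
    let A' := ULift.{w} A
    let MA' := ULift.{v} (M ⧸ NA)
    haveI : IsNoetherianRing A' := isNoetherianRing_of_ringEquiv A (ULift.ringEquiv).symm
    haveI : IsLocalRing A' := (ULift.ringEquiv (R := A)).symm.isLocalRing
    haveI : Module.Finite A MA' :=
      Module.Finite.equiv (ULift.moduleEquiv (R := A) (M := M ⧸ NA)).symm
    haveI : IsScalarTower A A' MA' :=
      ⟨fun a' b' c' => congrArg ULift.up (mul_smul a' b'.down c'.down)⟩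
    haveI : Module.Finite A' MA' := Module.Finite.of_restrictScalars_finite A A' MA'
    let up : A →+* A' := (ULift.ringEquiv (R := A)).symm.toRingHom
    have hupbij : Function.Bijective up := (ULift.ringEquiv (R := A)).symm.bijective
    let JA : Ideal A' := (IsLocalRing.maximalIdeal A).map up
    have hJAne : JA ≠ ⊤ := by
      intro hJ
      have hJ' : Ideal.map up (IsLocalRing.maximalIdeal A) = ⊤ := hJ
      have hcm := Ideal.comap_map_of_bijective up hupbij (I := IsLocalRing.maximalIdeal A)
      rw [hJ'] at hcm
      exact (Ideal.IsMaximal.ne_top (IsLocalRing.maximalIdeal.isMaximal A))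
        (by rw [← hcm, Ideal.comap_top])
    have hkrull := Ideal.iInf_pow_smul_eq_bot_of_isLocalRing (R := A') (M := MA') JA hJAne
    -- the image of `m ^ n • ⊤` lands in `JA ^ n • ⊤`.
    have hclaim : ∀ (n : ℕ) (v : M), v ∈ ((m ^ n : Ideal R) • ⊤ : Submodule R M) →
        ULift.up (Submodule.Quotient.mk (p := NA) v) ∈ (JA ^ n • ⊤ : Submodule A' MA') := by
      intro n v hv
      refine Submodule.smul_induction_on hv (fun c hc z _ => ?_) (fun a b ha hb => ?_)
      · have hcA : algebraMap R A c ∈ IsLocalRing.maximalIdeal A ^ n := by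
          have h1 : algebraMap R A c ∈ (Ideal.map (algebraMap R A) (m ^ n) : Ideal A) :=
            Ideal.mem_map_of_mem _ hc
          rw [Ideal.map_pow] at h1
          exact Ideal.pow_right_mono hmapm n h1
        have hupc : up (algebraMap R A c) ∈ JA ^ n := by
          have h2 : up (algebraMap R A c) ∈ (Ideal.map up (IsLocalRing.maximalIdeal A ^ n) : Ideal A') :=
            Ideal.mem_map_of_mem _ hcA
          rwa [Ideal.map_pow] at h2
        have hz : ULift.up (Submodule.Quotient.mk (p := NA) (c • z))
            = (up (algebraMap R A c)) • ULift.up (Submodule.Quotient.mk (p := NA) z) := by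
          rw [← algebraMap_smul A c z]
          exact congrArg ULift.up (Submodule.Quotient.mk_smul NA (algebraMap R A c) z)
        rw [hz]
        exact Submodule.smul_mem_smul hupc trivial
      · have hab : ULift.up (Submodule.Quotient.mk (p := NA) (a + b))
            = ULift.up (Submodule.Quotient.mk (p := NA) a)
              + ULift.up (Submodule.Quotient.mk (p := NA) b) := rfl
        rw [hab]
        exact Submodule.add_mem _ ha hb
    have hfinal : ULift.up (Submodule.Quotient.mk (p := NA) x) = (0 : MA') := by
      have hmemInf : ULift.up (Submodule.Quotient.mk (p := NA) x)
          ∈ (⨅ n : ℕ, JA ^ n • ⊤ : Submodule A' MA') := by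
        rw [Submodule.mem_iInf]
        intro n
        obtain ⟨uu, hu, vv, hv, huv⟩ := Submodule.mem_sup.mp (hxn n)
        have hmk : (Submodule.Quotient.mk (p := NA) x) = Submodule.Quotient.mk vv := by
          rw [← huv]
          have h3 : Submodule.Quotient.mk (p := NA) (uu + vv)
              = Submodule.Quotient.mk uu + Submodule.Quotient.mk vv := rfl
          rw [h3, (Submodule.Quotient.mk_eq_zero NA).mpr ((hNA uu).mpr hu), zero_add]
        rw [hmk]
        exact hclaim n vv hv
      rw [hkrull] at hmemInf
      simpa using hmemInf
    have hmk0 : Submodule.Quotient.mk (p := NA) x = 0 := congrArg ULift.down hfinal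
    exact (hNA x).mp ((Submodule.Quotient.mk_eq_zero NA).mp hmk0)
  -- Step D : `h` acts injectively on `M` itself.
  have hinjM : Function.Injective φ := by
    apply (injective_iff_map_eq_zero _).mpr
    intro x hx
    have h1 : h • x ∈ ((⊥ : Ideal R) • ⊤ : Submodule R M) := by
      rw [Submodule.bot_smul, Submodule.mem_bot, ← hφ_apply]
      exact hx
    have h2 := hB ⊥ x h1
    rwa [Submodule.bot_smul, Submodule.mem_bot] at h2
  -- `π` : the projection onto `M/hM`.
  set Nq := M ⧸ LinearMap.range φ with hNq
  set π : M →ₗ[R] Nq := (LinearMap.range φ).mkQ with hπ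
  have hπφ : π ∘ₗ φ = 0 :=
    LinearMap.ext fun x => (Submodule.Quotient.mk_eq_zero _).mpr ⟨x, rfl⟩
  -- Step C : `M/hM` is flat.
  have hflatN : Module.Flat R Nq := by
    rw [Module.Flat.iff_rTensor_injective']
    intro I
    apply (injective_iff_map_eq_zero _).mpr
    intro z hz
    have hπsurj : Function.Surjective π := Submodule.mkQ_surjective _
    obtain ⟨y, rfl⟩ := LinearMap.lTensor_surjective (I : Type u) hπsurj z
    -- `u` is the image of `y` in `R ⊗ M`.
    have hcol : (LinearMap.rTensor Nq I.subtype) ((π.lTensor I) y)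
        = (π.lTensor R) ((LinearMap.rTensor M I.subtype) y) := by
      rw [← LinearMap.comp_apply, ← LinearMap.comp_apply, LinearMap.rTensor_comp_lTensor,
        LinearMap.lTensor_comp_rTensor]
    have humem : ∀ y' : (I : Type u) ⊗[R] M,
        (TensorProduct.lid R M) ((LinearMap.rTensor M I.subtype) y')
          ∈ (I • ⊤ : Submodule R M) := by
      intro y'
      induction y' using TensorProduct.induction_on with
      | zero => simp
      | tmul c x0 =>
        simpa using Submodule.smul_mem_smul c.2 (Submodule.mem_top (x := x0))
      | add a b ha hb =>
        rw [map_add, map_add]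
        exact Submodule.add_mem _ ha hb
    have hontoI : ∀ x0 ∈ (I • ⊤ : Submodule R M), ∃ y' : (I : Type u) ⊗[R] M,
        (TensorProduct.lid R M) ((LinearMap.rTensor M I.subtype) y') = x0 := by
      intro x0 hx0
      refine Submodule.smul_induction_on hx0 (fun c hc z _ => ⟨(⟨c, hc⟩ : I) ⊗ₜ[R] z, by simp⟩) ?_
      rintro a b ⟨ya, hya⟩ ⟨yb, hyb⟩
      exact ⟨ya + yb, by rw [map_add, map_add, hya, hyb]⟩
    have h0 : π ((TensorProduct.lid R M) ((LinearMap.rTensor M I.subtype) y)) = 0 := by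
      rw [aux_lid π, ← hcol, hz]
      simp
    obtain ⟨x0, hx0⟩ : (TensorProduct.lid R M) ((LinearMap.rTensor M I.subtype) y)
        ∈ LinearMap.range φ := (Submodule.Quotient.mk_eq_zero _).mp h0
    have hx0mem : x0 ∈ (I • ⊤ : Submodule R M) := by
      apply hB I
      rw [← hφ_apply, hx0]
      exact humem y
    obtain ⟨y', hy'⟩ := hontoI x0 hx0mem
    have hcolinj : Function.Injective (LinearMap.rTensor M I.subtype) :=
      Module.Flat.rTensor_preserves_injective_linearMap _ (Submodule.injective_subtype I)
    have hyy' : y = (φ.lTensor I) y' := by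
      apply ((TensorProduct.lid R M).injective.comp hcolinj)
      show (TensorProduct.lid R M) ((LinearMap.rTensor M I.subtype) y)
        = (TensorProduct.lid R M) ((LinearMap.rTensor M I.subtype) ((φ.lTensor I) y'))
      rw [← LinearMap.comp_apply (LinearMap.rTensor M I.subtype), LinearMap.rTensor_comp_lTensor,
        ← LinearMap.lTensor_comp_rTensor, LinearMap.comp_apply, ← aux_lid φ, hy', hx0]
    rw [hyy', ← LinearMap.comp_apply, ← LinearMap.lTensor_comp, hπφ, LinearMap.lTensor_zero,
      LinearMap.zero_apply]
  -- Part 1 : `h` acts injectively on `M ⊗ T` for every `R`-module `T`.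
  have hpart1 : ∀ (T : Type t) [AddCommGroup T] [Module R T],
      Function.Injective (φ.rTensor T) := by
    intro T _ _
    apply (injective_iff_map_eq_zero _).mpr
    intro x hx
    let p : (T →₀ R) →ₗ[R] T := Finsupp.linearCombination R _root_.id
    have hpsurj : Function.Surjective p := by
      rw [← LinearMap.range_eq_top, Finsupp.range_linearCombination, Set.range_id,
        Submodule.span_univ]
    obtain ⟨y, rfl⟩ := LinearMap.lTensor_surjective M hpsurj x
    have h1 : (p.lTensor M) ((φ.rTensor (T →₀ R)) y) = 0 := by
      rw [← LinearMap.comp_apply, LinearMap.lTensor_comp_rTensor,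
        ← LinearMap.rTensor_comp_lTensor, LinearMap.comp_apply, hx]
    have hexK := @lTensor_exact R (LinearMap.ker p) (T →₀ R) T _ _ _ _ _ _ _
      (LinearMap.ker p).subtype p M _ _ (LinearMap.exact_subtype_ker_map p) hpsurj
    obtain ⟨w, hw⟩ := (hexK ((φ.rTensor (T →₀ R)) y)).mp h1
    -- `w : M ⊗ K` with `(K.subtype.lTensor M) w = φ.rTensor F y`
    have h2 : (π.rTensor (LinearMap.ker p)) w = 0 := by
      have hNinj : Function.Injective ((LinearMap.ker p).subtype.lTensor Nq) :=
        Module.Flat.lTensor_preserves_injective_linearMap _ (Submodule.injective_subtype _)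
      apply hNinj
      rw [map_zero, ← LinearMap.comp_apply, LinearMap.lTensor_comp_rTensor,
        ← LinearMap.rTensor_comp_lTensor, LinearMap.comp_apply, hw, ← LinearMap.comp_apply,
        ← LinearMap.rTensor_comp, hπφ, LinearMap.rTensor_zero, LinearMap.zero_apply]
    have hexφ := @rTensor_exact R M M Nq _ _ _ _ _ _ _ φ π (LinearMap.ker p) _ _
      (LinearMap.exact_map_mkQ_range φ) (Submodule.mkQ_surjective _)
    obtain ⟨v, hv⟩ := (hexφ w).mp h2
    have h3 : (φ.rTensor (T →₀ R)) ((LinearMap.ker p).subtype.lTensor M v)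
        = (φ.rTensor (T →₀ R)) y := by
      rw [← LinearMap.comp_apply, LinearMap.rTensor_comp_lTensor,
        ← LinearMap.lTensor_comp_rTensor, LinearMap.comp_apply, hv, hw]
    have h4 : (LinearMap.ker p).subtype.lTensor M v = y :=
      (Module.Flat.rTensor_preserves_injective_linearMap (M := T →₀ R) φ hinjM) h3
    rw [← h4, ← LinearMap.comp_apply, ← LinearMap.lTensor_comp,
      show p ∘ₗ (LinearMap.ker p).subtype = 0 from LinearMap.ext fun k => k.2,
      LinearMap.lTensor_zero, LinearMap.zero_apply]
  exact ⟨fun T _ _ => hpart1 T, hflatN⟩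
end

section
/- Let A ⊆ B be noetherian rings with B integral over A and B a torsion-free A-module, where A is reduced and equidimensional of finite dimension. If P is a minimal prime of B and p = P ∩ A, then p is a minimal prime of A and dim(B/P) = dim(A/p) = dim A. -/
/-!
Elements of a minimal prime `P` of `B` are zero divisors of `B`, so by torsion-freeness the
elements of `p = P ∩ A` are zero divisors of `A`. In the reduced noetherian ring `A` these form
the finite union of the minimal primes, and prime avoidance puts `p` inside one of them, which
forces equality. The dimension statements then come from `A ⧸ p ⊆ B ⧸ P` being an integral
extension (incomparability and going up) and from equidimensionality of `A`.
-/

universe u v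

/-- A noetherian ring is equidimensional if it has finite Krull dimension and
`dim (R ⧸ q) = dim R` for every minimal prime `q`. -/
def IsEquidimensionalRing (R : Type u) [CommRing R] : Prop :=
  ringKrullDim R < ⊤ ∧ ∀ q ∈ minimalPrimes R, ringKrullDim (R ⧸ q) = ringKrullDim R

section ZeroDivisors

variable {R : Type*} [CommRing R]

theorem biUnion_minimalPrimes_eq_compl_nonZeroDivisors [IsReduced R] :
    ⋃ q ∈ minimalPrimes R, (q : Set R) = (nonZeroDivisors R : Set R)ᶜ := by
  ext x
  rw [minimalPrimes, Ideal.iUnion_minimalPrimes, Ideal.radical_bot_of_isReduced]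
  simp [mem_nonZeroDivisors_iff_right, mul_comm x, and_comm]

theorem Ideal.mem_minimalPrimes_of_subset_biUnion [IsNoetherianRing R] {p : Ideal R}
    [p.IsPrime] (hp : (p : Set R) ⊆ ⋃ q ∈ minimalPrimes R, (q : Set R)) :
    p ∈ minimalPrimes R := by
  obtain ⟨q, hq, hpq⟩ := (Ideal.subset_union_prime_finite
    (minimalPrimes.finite_of_isNoetherianRing R) (f := id) ⊥ ⊥
    fun q hq _ _ ↦ hq.isPrime).mp hp
  exact le_antisymm hpq (hq.2 ⟨inferInstance, bot_le⟩ hpq) ▸ hq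

theorem Ideal.disjoint_comap_nonZeroDivisors_of_mem_minimalPrimes {S : Type*} [CommRing S]
    [Algebra R S] (htf : ∀ a ∈ nonZeroDivisors R, ∀ b : S, a • b = 0 → b = 0)
    {P : Ideal S} (hP : P ∈ minimalPrimes S) :
    Disjoint (P.comap (algebraMap R S) : Set R) (nonZeroDivisors R) := by
  refine Set.disjoint_left.mpr fun a ha hreg ↦ ?_
  obtain ⟨b, hb, hab⟩ := Ideal.exists_mul_mem_of_mem_minimalPrimes hP ha
  exact hb (htf a hreg b (by rwa [Algebra.smul_def, ← Ideal.mem_bot]))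

end ZeroDivisors

section IntegralExtension

variable {R S : Type*} [CommRing R] [CommRing S] [Algebra R S] [Algebra.IsIntegral R S]

theorem ringKrullDim_le_of_isIntegral : ringKrullDim S ≤ ringKrullDim R :=
  Order.krullDim_le_of_strictMono (PrimeSpectrum.comap (algebraMap R S)) fun P Q hPQ ↦ by
    obtain ⟨x, hxQ, hxP⟩ := SetLike.exists_of_lt (show P.asIdeal < Q.asIdeal from hPQ)
    exact Ideal.comap_lt_comap_of_integral_mem_sdiff hPQ.le ⟨hxQ, hxP⟩
      (Algebra.IsIntegral.isIntegral x)

theorem le_ringKrullDim_of_isIntegral [FaithfulSMul R S] : ringKrullDim R ≤ ringKrullDim S :=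
  iSup_le fun l ↦ by
    obtain ⟨P, hP, _⟩ := (Ideal.nonempty_primesOver (S := S) l.head.asIdeal).some
    obtain ⟨L, hlen, -⟩ := Ideal.exists_ltSeries_of_hasGoingUp l P
    exact hlen ▸ Order.LTSeries.length_le_krullDim L

theorem ringKrullDim_eq_of_isIntegral [FaithfulSMul R S] : ringKrullDim S = ringKrullDim R :=
  ringKrullDim_le_of_isIntegral.antisymm le_ringKrullDim_of_isIntegral

end IntegralExtension

theorem minimal_prime_contraction_of_integral_torsionFree_general
    (A : Type u) (B : Type v) [CommRing A] [CommRing B]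
    [IsNoetherianRing A]
    [IsReduced A] [Algebra A B] [Algebra.IsIntegral A B]
    (hA : IsEquidimensionalRing A)
    (htf : ∀ a ∈ nonZeroDivisors A, ∀ b : B, a • b = 0 → b = 0)
    (P : Ideal B) (hP : P ∈ minimalPrimes B) :
    P.comap (algebraMap A B) ∈ minimalPrimes A ∧
    ringKrullDim (B ⧸ P) = ringKrullDim (A ⧸ P.comap (algebraMap A B)) ∧
    ringKrullDim (A ⧸ P.comap (algebraMap A B)) = ringKrullDim A := by
  have : P.IsPrime := hP.isPrime
  have hmin : P.comap (algebraMap A B) ∈ minimalPrimes A := by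
    apply Ideal.mem_minimalPrimes_of_subset_biUnion
    rw [biUnion_minimalPrimes_eq_compl_nonZeroDivisors]
    exact (Ideal.disjoint_comap_nonZeroDivisors_of_mem_minimalPrimes htf hP).subset_compl_right
  exact ⟨hmin, ringKrullDim_eq_of_isIntegral, hA.2 _ hmin⟩

/-- Let `A ⊆ B` be noetherian rings with `B` integral over `A` and torsion-free as an
`A`-module, where `A` is reduced and equidimensional of finite dimension.  If `P` is a
minimal prime of `B` and `p = P ∩ A`, then `p` is a minimal prime of `A` and
`dim (B ⧸ P) = dim (A ⧸ p) = dim A`. -/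
theorem minimal_prime_contraction_of_integral_torsionFree
    (A : Type u) (B : Type v) [CommRing A] [CommRing B]
    [IsNoetherianRing A] [IsNoetherianRing B]
    [IsReduced A] [Algebra A B] [Algebra.IsIntegral A B]
    (hinj : Function.Injective (algebraMap A B))
    (hA : IsEquidimensionalRing A)
    (htf : ∀ a ∈ nonZeroDivisors A, ∀ b : B, a • b = 0 → b = 0)
    (P : Ideal B) (hP : P ∈ minimalPrimes B) :
    P.comap (algebraMap A B) ∈ minimalPrimes A ∧
    ringKrullDim (B ⧸ P) = ringKrullDim (A ⧸ P.comap (algebraMap A B)) ∧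
    ringKrullDim (A ⧸ P.comap (algebraMap A B)) = ringKrullDim A :=
  minimal_prime_contraction_of_integral_torsionFree_general A B hA htf P hP
end

section
/- Let (R, m, k) be a noetherian local ring and φ: R → A a flat local homomorphism of noetherian local rings such that A/mA is reduced and A is reduced. Then mA = mB ∩ A for any finite ring extension A ⊆ B inside the total quotient ring of A; in particular the induced map A/mA → B/mB is injective, and B/mB is a finite module over A/mA of the same Krull dimension. -/
/-!
Since `A/mA` is reduced, `mA` is an intersection of primes. `B` is integral over `A`, and
`A → B` is injective because both sit inside `K`, so by lying-over every prime of `A` is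
contracted from a prime of `B`; hence so is every radical ideal, and `mB ∩ A = mA`.
The extension `A/mA ⊆ B/mB` is then again injective and integral, and going-up together
with incomparability shows it preserves Krull dimension.
-/

namespace Ideal

variable {S T : Type*} [CommRing S] [CommRing T] [Algebra S T]
  [Algebra.IsIntegral S T] [FaithfulSMul S T]

theorem IsRadical.comap_map_of_isIntegral {I : Ideal S} (hI : I.IsRadical) :
    (I.map (algebraMap S T)).comap (algebraMap S T) = I := by
  refine le_antisymm (fun x hx => hI ?_) le_comap_map
  rw [radical_eq_sInf, Submodule.mem_sInf]
  rintro p ⟨hIp, _⟩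
  obtain ⟨Q, -, hQp⟩ := (nonempty_primesOver (S := T) p).some
  have hpQ : p = Q.comap (algebraMap S T) := hQp.over
  rw [hpQ] at hIp ⊢
  exact comap_mono (map_le_iff_le_comap.mpr hIp) hx

end Ideal

theorem ringKrullDim_eq_of_isIntegral_s11 (S T : Type*) [CommRing S] [CommRing T] [Algebra S T]
    [Algebra.IsIntegral S T] [FaithfulSMul S T] : ringKrullDim T = ringKrullDim S := by
  refine le_antisymm (Order.krullDim_le_of_strictMono (PrimeSpectrum.comap (algebraMap S T))
    fun P Q hPQ => Ideal.IsIntegral.comap_lt_comap hPQ) (iSup_le fun l => ?_)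
  obtain ⟨P, _, _⟩ := (Ideal.nonempty_primesOver (S := T) l.head.asIdeal).some
  obtain ⟨L, hL, -⟩ := Ideal.exists_ltSeries_of_hasGoingUp l P
  exact hL ▸ Order.LTSeries.length_le_krullDim L

instance Subalgebra.faithfulSMul {A K : Type*} [CommRing A] [CommRing K] [Algebra A K]
    [FaithfulSMul A K] (B : Subalgebra A K) : FaithfulSMul A B :=
  (faithfulSMul_iff_algebraMap_injective A B).mpr fun _ _ h =>
    FaithfulSMul.algebraMap_injective A K (congrArg Subtype.val h)

/-- Let `(R, m, k) → A` be a flat local homomorphism of noetherian local rings with `A`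
and `A/mA` reduced, and let `B` be a finite ring extension of `A` inside the total
quotient ring `K` of `A`.  Then `mA = mB ∩ A`; in particular the induced map
`A/mA → B/mB` is injective, and `B/mB` is a finite module over `A/mA` of the same Krull
dimension. -/
theorem contraction_of_extended_maximal_ideal
    (R : Type u) [CommRing R] [IsLocalRing R]
    (A : Type v) [CommRing A]
    [Algebra R A]
    (hred : IsReduced (A ⧸ (IsLocalRing.maximalIdeal R).map (algebraMap R A)))
    (K : Type w) [CommRing K] [Algebra A K] [IsFractionRing A K]
    [Algebra R K] [IsScalarTower R A K]
    (B : Subalgebra A K) [Module.Finite A B] :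
    ((IsLocalRing.maximalIdeal R).map (algebraMap R B)).comap (algebraMap A B) =
      (IsLocalRing.maximalIdeal R).map (algebraMap R A) ∧
    Function.Injective
      (Ideal.quotientMap (I := (IsLocalRing.maximalIdeal R).map (algebraMap R A))
        ((IsLocalRing.maximalIdeal R).map (algebraMap R B))
        (algebraMap A B)
        (by rw [Ideal.map_le_iff_le_comap, Ideal.comap_comap, ← IsScalarTower.algebraMap_eq]
            exact Ideal.le_comap_map)) ∧
    Module.Finite A (B ⧸ (IsLocalRing.maximalIdeal R).map (algebraMap R B)) ∧
    ringKrullDim (B ⧸ (IsLocalRing.maximalIdeal R).map (algebraMap R B)) =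
      ringKrullDim (A ⧸ (IsLocalRing.maximalIdeal R).map (algebraMap R A)) := by
  set I := (IsLocalRing.maximalIdeal R).map (algebraMap R A)
  set J := (IsLocalRing.maximalIdeal R).map (algebraMap R B)
  have hJ : J = I.map (algebraMap A B) := by
    rw [Ideal.map_map, ← IsScalarTower.algebraMap_eq]
  have hcontr : J.comap (algebraMap A B) = I := by
    rw [hJ]
    exact ((Ideal.isRadical_iff_quotient_reduced I).mpr hred).comap_map_of_isIntegral
  refine ⟨hcontr, Ideal.quotientMap_injective' hcontr.le, inferInstance, ?_⟩
  have hdim := ringKrullDim_eq_of_isIntegral_s11 (A ⧸ J.comap (algebraMap A B)) (B ⧸ J)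
  rwa [hcontr] at hdim
end

section
/- Let (A, M) be a noetherian local ring that is reduced, with total quotient ring K_A and finite integral closure Ā, and suppose m ⊆ M is an ideal such that A/mA is reduced and A_P is normal for every minimal prime P of (0) and of mA. Let C be the conductor of A and C' the preimage in A of the conductor of A/mA. Then there exists h ∈ C ∩ C' such that h is a nonzerodivisor on A and a nonzerodivisor on A/mA; in particular hĀ ⊆ A and (the image of h) times the integral closure of A/mA lies in A/mA. -/
/-!
The conductor of `A` is the annihilator of the finite `A`-module `Ā/A`, so it escapes a prime `P`
as soon as `(Ā/A)_P = 0`, which is the case when `A_P` is normal. Hence the conductor of `A` and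
the preimage of the conductor of `A/m` (the latter contains `m`, and `A/m` is a field at its
minimal primes, being reduced) escape every minimal prime of `(0)` and of `m`. These are finitely
many, so prime avoidance yields `h` in both conductors outside all of them, and in a reduced ring
an element outside every minimal prime is a nonzerodivisor.
-/

universe u

open IsLocalRing

open scoped nonZeroDivisors

lemma Submodule.colon_not_le_of_exists_smul_mem {R M : Type*} [CommRing R] [AddCommGroup M]
    [Module R M] {N L : Submodule R M} (hL : L.FG) {p : Ideal R} [p.IsPrime]
    (h : ∀ x ∈ L, ∃ r ∉ p, r • x ∈ N) : ¬ N.colon L ≤ p := by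
  rw [← annihilator_map_mkQ_eq_colon]
  have : Module.Finite R (L.map N.mkQ) := Module.Finite.iff_fg.mpr (hL.map _)
  rw [Submodule.annihilator, ← Module.mem_support_iff_of_finite (p := ⟨p, inferInstance⟩),
    Module.notMem_support_iff']
  rintro ⟨_, x, hx, rfl⟩
  obtain ⟨r, hr, hrx⟩ := h x hx
  exact ⟨r, hr, Subtype.ext ((Submodule.Quotient.mk_eq_zero N).mpr hrx)⟩

lemma isField_localization_atPrime_of_mem_minimalPrimes {R : Type*} [CommRing R] [IsReduced R]
    {Q : Ideal R} [Q.IsPrime] (hQ : Q ∈ minimalPrimes R) : IsField (Localization.AtPrime Q) :=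
  haveI := Ring.KrullDimLE.of_isLocalization Q hQ (Localization.AtPrime Q)
  Ring.KrullDimLE.isField_of_isReduced

lemma mem_nonZeroDivisors_of_forall_notMem_minimalPrimes {R : Type*} [CommRing R] [IsReduced R]
    {x : R} (hx : ∀ P ∈ minimalPrimes R, x ∉ P) : x ∈ R⁰ := by
  refine mem_nonZeroDivisors_iff_right.mpr fun y hyx => ?_
  have hy : y ∈ sInf (minimalPrimes R) := Submodule.mem_sInf.mpr fun P hP =>
    (hP.1.1.mem_or_mem (hyx ▸ P.zero_mem)).resolve_right (hx P hP)
  rwa [minimalPrimes, Ideal.sInf_minimalPrimes, Ideal.radical_bot_of_isReduced] at hy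

lemma Ideal.mem_minimalPrimes_of_le {R : Type*} [CommRing R] {I J P : Ideal R}
    (hP : P ∈ I.minimalPrimes) (hIJ : I ≤ J) (hJP : J ≤ P) : P ∈ J.minimalPrimes :=
  ⟨⟨hP.1.1, hJP⟩, fun _ hQ hQP => hP.2 ⟨hQ.1, hIJ.trans hQ.2⟩ hQP⟩

lemma Ideal.exists_mem_forall_notMem_of_finite {R : Type*} [CommRing R] {S : Set (Ideal R)}
    (hS : S.Finite) (hp : ∀ P ∈ S, P.IsPrime) {I : Ideal R} (hI : ∀ P ∈ S, ¬ I ≤ P) :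
    ∃ x ∈ I, ∀ P ∈ S, x ∉ P := by
  have := (Ideal.subset_union_prime_finite hS (f := id) ⊥ ⊥ fun P hP _ _ => hp P hP).not.mpr
    (by simpa using hI)
  simpa [Set.not_subset] using this

section AtPrime

variable {A K : Type*} [CommRing A] [CommRing K] [Algebra A K] [IsFractionRing A K]
  (P : Ideal A) [P.IsPrime]

noncomputable abbrev toFractionRingAtPrime : K →+* FractionRing (Localization.AtPrime P) :=
  IsLocalization.map _ (algebraMap A (Localization.AtPrime P))
    (IsLocalization.nonZeroDivisors_le_comap P.primeCompl _)

variable {P}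

lemma exists_notMem_smul_eq_zero_of_toFractionRingAtPrime_eq_zero {y : K}
    (hy : toFractionRingAtPrime P y = 0) : ∃ u ∉ P, u • y = 0 := by
  obtain ⟨⟨b, t⟩, rfl⟩ := IsLocalization.mk'_surjective A⁰ y
  rw [IsLocalization.map_mk', IsLocalization.mk'_eq_zero_iff] at hy
  obtain ⟨⟨c, hc⟩, hcb⟩ := hy
  obtain ⟨⟨u, hu⟩, hub⟩ := (IsLocalization.map_eq_zero_iff P.primeCompl _ b).mp
    (mem_nonZeroDivisors_iff_left.mp hc _ hcb)
  exact ⟨u, hu, by rw [IsLocalization.smul_mk', hub, IsLocalization.mk'_zero]⟩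

lemma exists_notMem_smul_mem_range_of_isIntegral
    [IsIntegrallyClosed (Localization.AtPrime P)] {x : K} (hx : IsIntegral A x) :
    ∃ r ∉ P, r • x ∈ LinearMap.range (Algebra.linearMap A K) := by
  -- `x` becomes some `a / s` in `Frac(A_P)`, so `s • x - a` is killed there, hence by some `u ∉ P`.
  have hχx : IsIntegral (Localization.AtPrime P) (toFractionRingAtPrime P x) :=
    hx.map_of_comp_eq _ _ (IsLocalization.map_comp _).symm
  obtain ⟨α, hα⟩ := IsIntegrallyClosed.isIntegral_iff.mp hχx
  obtain ⟨⟨a, ⟨s, hs⟩⟩, rfl⟩ := IsLocalization.mk'_surjective P.primeCompl α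
  have hker : toFractionRingAtPrime P (s • x - algebraMap A K a) = 0 := by
    rw [map_sub, Algebra.smul_def, map_mul, ← hα, IsLocalization.map_eq, IsLocalization.map_eq,
      ← map_mul, mul_comm, IsLocalization.mk'_spec, sub_self]
  obtain ⟨u, hu, hux⟩ := exists_notMem_smul_eq_zero_of_toFractionRingAtPrime_eq_zero hker
  refine ⟨u * s, ?_, u * a, ?_⟩
  · exact P.primeCompl.mul_mem hu hs
  · rw [Algebra.linearMap_apply, map_mul, mul_smul, ← Algebra.smul_def, eq_comm, ← sub_eq_zero,
      ← smul_sub, hux]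

end AtPrime

abbrev integralConductor (A K : Type*) [CommRing A] [CommRing K] [Algebra A K] : Ideal A :=
  (LinearMap.range (Algebra.linearMap A K)).colon (Subalgebra.toSubmodule (integralClosure A K))

lemma integralConductor_not_le {A K : Type*} [CommRing A] [CommRing K] [Algebra A K]
    [IsFractionRing A K] [Module.Finite A (integralClosure A K)] (P : Ideal A) [P.IsPrime]
    [IsIntegrallyClosed (Localization.AtPrime P)] : ¬ integralConductor A K ≤ P :=
  Submodule.colon_not_le_of_exists_smul_mem (Module.Finite.iff_fg.mp ‹_›)
    fun _ hx => exists_notMem_smul_mem_range_of_isIntegral hx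

lemma comap_integralConductor_quotient_not_le {A : Type*} [CommRing A] {m : Ideal A}
    [IsReduced (A ⧸ m)] [Module.Finite (A ⧸ m) (integralClosure (A ⧸ m) (FractionRing (A ⧸ m)))]
    {P : Ideal A} (hP : P ∈ m.minimalPrimes ∨ ¬ m ≤ P) :
    ¬ (integralConductor (A ⧸ m) (FractionRing (A ⧸ m))).comap (Ideal.Quotient.mk m) ≤ P := by
  rcases hP with hP | hmP
  · rw [Ideal.minimalPrimes_eq_comap] at hP
    obtain ⟨Q, hQ, rfl⟩ := hP
    have : Q.IsPrime := hQ.1.1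
    let := (isField_localization_atPrime_of_mem_minimalPrimes hQ).toField
    rw [Ideal.comap_le_comap_iff_of_surjective _ Ideal.Quotient.mk_surjective]
    exact integralConductor_not_le Q
  · refine fun hle => hmP fun a ha => hle ?_
    rw [Ideal.mem_comap, Ideal.Quotient.eq_zero_iff_mem.mpr ha]
    exact zero_mem _

theorem exists_conductor_element_regular_on_ring_and_fiber_general
    (A : Type u) [CommRing A] [IsNoetherianRing A] [IsReduced A]
    [Module.Finite A (integralClosure A (FractionRing A))]
    (m : Ideal A)
    (hred : IsReduced (A ⧸ m))
    [Module.Finite (A ⧸ m) (integralClosure (A ⧸ m) (FractionRing (A ⧸ m)))]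
    (hnor : ∀ (P : Ideal A) [P.IsPrime],
      (P ∈ minimalPrimes A ∨ P ∈ m.minimalPrimes) →
      IsDomain (Localization.AtPrime P) ∧ IsIntegrallyClosed (Localization.AtPrime P)) :
    ∃ h : A,
      h ∈ (LinearMap.range (Algebra.linearMap A (FractionRing A))).colon
            (Subalgebra.toSubmodule (integralClosure A (FractionRing A))) ∧
      h ∈ (((LinearMap.range (Algebra.linearMap (A ⧸ m) (FractionRing (A ⧸ m)))).colon
              (Subalgebra.toSubmodule
                (integralClosure (A ⧸ m) (FractionRing (A ⧸ m))))).comap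
            (Ideal.Quotient.mk m)) ∧
      h ∈ nonZeroDivisors A ∧
      Ideal.Quotient.mk m h ∈ nonZeroDivisors (A ⧸ m) := by
  set T := minimalPrimes A ∪ m.minimalPrimes
  have hTprime : ∀ P ∈ T, P.IsPrime := fun P hP => hP.elim (·.1.1) (·.1.1)
  have hT : ∀ P ∈ T, ¬ integralConductor A (FractionRing A) ⊓
      (integralConductor (A ⧸ m) (FractionRing (A ⧸ m))).comap (Ideal.Quotient.mk m) ≤ P := by
    intro P hPT
    have hP := hTprime P hPT
    have := (hnor P hPT).2
    rw [hP.inf_le, not_or]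
    refine ⟨integralConductor_not_le P, comap_integralConductor_quotient_not_le ?_⟩
    by_cases hmP : m ≤ P
    · exact .inl (hPT.elim (Ideal.mem_minimalPrimes_of_le · bot_le hmP) id)
    · exact .inr hmP
  obtain ⟨h, ⟨hC, hC'⟩, hhT⟩ := Ideal.exists_mem_forall_notMem_of_finite
    ((minimalPrimes.finite_of_isNoetherianRing A).union
      (Ideal.finite_minimalPrimes_of_isNoetherianRing A m)) hTprime hT
  refine ⟨h, hC, hC', mem_nonZeroDivisors_of_forall_notMem_minimalPrimes
    fun P hP => hhT P (.inl hP), ?_⟩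
  refine mem_nonZeroDivisors_of_forall_notMem_minimalPrimes fun Q hQ => hhT (Q.comap _) (.inr ?_)
  rw [Ideal.minimalPrimes_eq_comap]
  exact ⟨Q, hQ, rfl⟩

/-- Let `(A, M)` be a reduced noetherian local ring with finite integral closure `Ā`, and
`m ⊆ M` an ideal such that `A/m` is reduced (with finite integral closure) and `A_P` is
normal for every minimal prime `P` of `(0)` and of `m`.  Let `C` be the conductor of `A`
and `C'` the preimage in `A` of the conductor of `A/m`.  Then there exists
`h ∈ C ∩ C'` which is a nonzerodivisor on `A` and on `A/m`; in particular `hĀ ⊆ A` and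
(the image of) `h` multiplies the integral closure of `A/m` into `A/m`. -/
theorem exists_conductor_element_regular_on_ring_and_fiber
    (A : Type u) [CommRing A] [IsNoetherianRing A] [IsLocalRing A] [IsReduced A]
    [Module.Finite A (integralClosure A (FractionRing A))]
    (m : Ideal A) (hm : m ≤ maximalIdeal A)
    (hred : IsReduced (A ⧸ m))
    [Module.Finite (A ⧸ m) (integralClosure (A ⧸ m) (FractionRing (A ⧸ m)))]
    (hnor : ∀ (P : Ideal A) [P.IsPrime],
      (P ∈ minimalPrimes A ∨ P ∈ m.minimalPrimes) →
      IsDomain (Localization.AtPrime P) ∧ IsIntegrallyClosed (Localization.AtPrime P)) :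
    ∃ h : A,
      h ∈ (LinearMap.range (Algebra.linearMap A (FractionRing A))).colon
            (Subalgebra.toSubmodule (integralClosure A (FractionRing A))) ∧
      h ∈ (((LinearMap.range (Algebra.linearMap (A ⧸ m) (FractionRing (A ⧸ m)))).colon
              (Subalgebra.toSubmodule
                (integralClosure (A ⧸ m) (FractionRing (A ⧸ m))))).comap
            (Ideal.Quotient.mk m)) ∧
      h ∈ nonZeroDivisors A ∧
      Ideal.Quotient.mk m h ∈ nonZeroDivisors (A ⧸ m) :=
  exists_conductor_element_regular_on_ring_and_fiber_general A m hred hnor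
end
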